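/- Let g: ℂ → ℂ be analytic on an open set with an attracting fixed point x₀ of multiplier μ with 0 < |μ| < 1, and suppose f is a linearizing map, i.e., f(x₀) = 0, f'(x₀) ≠ 0, and f(g(z)) = μ f(z) on a neighborhood of x₀. Then the maximal domain of analytic continuation of f via the relation f(z) = μ⁻ⁿ f(gⁿ(z)) equals the immediate basin of attraction of x₀ under g. -/

import Mathlib

/-!
By the Schröder equation, `f ∘ gⁿ = μⁿ f` on `V`, so `f ∘ gⁿ → 0` locally uniformly on the whole
domain of continuation `D`. Since `f'(x₀) ≠ 0`, `f` is a local homeomorphism at `x₀`; this yields a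
forward-invariant open neighbourhood `W` of `x₀` on which orbits converge to `x₀` and which is cut
out of its closure by `‖f‖ < δ`. The points of `D` whose orbit enters `W` then form a clopen subset
of `D`: near a limit point, on a connected neighbourhood where `‖f ∘ gᵐ‖ < δ`, "the `m`-th iterate
lies in `W`" is open and closed, and holds somewhere. So the component of `D` at `x₀` lies in the
basin; conversely, orbits in the basin enter `V`, so the basin lies in `D`.
-/

open Filter Set Function Metric
open scoped Topology

section ReachSet

variable {X : Type*} {g : X → X} {U S : Set X}

def reachSetAt (g : X → X) (U S : Set X) (n : ℕ) : Set X :=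
  {z | (∀ k ≤ n, g^[k] z ∈ U) ∧ g^[n] z ∈ S}

def reachSet (g : X → X) (U S : Set X) : Set X :=
  {z | ∃ n, z ∈ reachSetAt g U S n}

theorem reachSetAt_zero : reachSetAt g U S 0 = U ∩ S := by
  ext z
  simp [reachSetAt]

theorem reachSetAt_succ (n : ℕ) :
    reachSetAt g U S (n + 1) = U ∩ g ⁻¹' reachSetAt g U S n := by
  ext z
  simp only [reachSetAt, mem_inter_iff, mem_preimage, mem_ofPred_eq, ← iterate_succ_apply]
  constructor
  · rintro ⟨hU, hS⟩
    exact ⟨hU 0 (Nat.zero_le _), fun k hk => hU (k + 1) (by omega), hS⟩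
  · rintro ⟨hz, hU, hS⟩
    refine ⟨fun k hk => ?_, hS⟩
    cases k with
    | zero => exact hz
    | succ k => exact hU k (by omega)

theorem reachSet_subset : reachSet g U S ⊆ U := fun _ ⟨_, hU, _⟩ => hU 0 (Nat.zero_le _)

theorem mapsTo_reachSet (hSU : S ⊆ U) (hgS : MapsTo g S S) :
    MapsTo g (reachSet g U S) (reachSet g U S) := by
  rintro z ⟨_ | n, hz⟩
  · rw [reachSetAt_zero] at hz
    exact ⟨0, by rw [reachSetAt_zero]; exact ⟨hSU (hgS hz.2), hgS hz.2⟩⟩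
  · rw [reachSetAt_succ] at hz
    exact ⟨n, hz.2⟩

variable [TopologicalSpace X]

theorem isOpen_reachSetAt (hU : IsOpen U) (hg : ContinuousOn g U) (hS : IsOpen S) (n : ℕ) :
    IsOpen (reachSetAt g U S n) := by
  induction n with
  | zero => rw [reachSetAt_zero]; exact hU.inter hS
  | succ n ih => rw [reachSetAt_succ]; exact hg.isOpen_inter_preimage hU ih

theorem isOpen_reachSet (hU : IsOpen U) (hg : ContinuousOn g U) (hS : IsOpen S) :
    IsOpen (reachSet g U S) := by
  rw [reachSet, ofPred_exists]
  exact isOpen_iUnion fun n => isOpen_reachSetAt hU hg hS n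

theorem mem_reachSet_of_tendsto {z x : X} (hzU : ∀ n, g^[n] z ∈ U)
    (hz : Tendsto (fun n => g^[n] z) atTop (𝓝 x)) (hS : S ∈ 𝓝 x) : z ∈ reachSet g U S :=
  let ⟨n, hn⟩ := (hz.eventually_mem hS).exists
  ⟨n, fun k _ => hzU k, hn⟩

end ReachSet

section Absorption

variable {X : Type*} [TopologicalSpace X] [LocallyConnectedSpace X] {E : Type*}
  [SeminormedAddCommGroup E] {g : X → X} {f : X → E} {D W : Set X} {δ : ℝ}

theorem closure_setOf_iterate_mem_inter_subset
    (hD : IsOpen D) (hgD : MapsTo g D D) (hg : ContinuousOn g D)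
    (hW : IsOpen W) (hgW : MapsTo g W W) (hδ : 0 < δ)
    (hWf : ∀ u ∈ closure W, ‖f u‖ < δ → u ∈ W)
    (hf : TendstoLocallyUniformlyOn (fun n => f ∘ g^[n]) 0 atTop D) :
    closure {x | ∃ k, g^[k] x ∈ W} ∩ D ⊆ {x | ∃ k, g^[k] x ∈ W} := by
  rintro x ⟨hxA, hxD⟩
  obtain ⟨t, ht, hsmall⟩ := Metric.tendstoLocallyUniformlyOn_iff.1 hf δ hδ x hxD
  obtain ⟨O, ⟨hO, hxO, hOconn⟩, hOt⟩ := (LocallyConnectedSpace.open_connected_basis x).mem_iff.1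
    (inter_mem (hD.nhdsWithin_eq hxD ▸ ht) (hD.mem_nhds hxD))
  obtain ⟨y, hyO, k, hk⟩ := mem_closure_iff.1 hxA O hO hxO
  obtain ⟨m, hm, hkm⟩ := (hsmall.and (eventually_ge_atTop k)).exists
  have hcont : ContinuousOn g^[m] O := (hg.iterate hgD m).mono fun z hz => (hOt hz).2
  have hsub : O ⊆ O ∩ g^[m] ⁻¹' W := by
    refine hOconn.isPreconnected.subset_of_closure_inter_subset
      (hcont.isOpen_inter_preimage hO hW) ⟨y, hyO, hyO, ?_⟩ ?_
    · rw [mem_preimage, ← Nat.sub_add_cancel hkm, iterate_add_apply]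
      exact hgW.iterate _ hk
    · rintro z ⟨hzS, hzO⟩
      refine ⟨hzO, hWf _ ?_ ?_⟩
      · exact closure_mono (image_subset_iff.2 inter_subset_right)
          ((hcont.continuousAt (hO.mem_nhds hzO)).continuousWithinAt.mem_closure_image hzS)
      · simpa using hm z (hOt hzO).1
  exact ⟨m, (hsub hxO).2⟩

theorem connectedComponentIn_subset_setOf_iterate_mem
    (hD : IsOpen D) (hgD : MapsTo g D D) (hg : ContinuousOn g D)
    (hW : IsOpen W) (hgW : MapsTo g W W) (hδ : 0 < δ)
    (hWf : ∀ u ∈ closure W, ‖f u‖ < δ → u ∈ W)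
    (hf : TendstoLocallyUniformlyOn (fun n => f ∘ g^[n]) 0 atTop D) {x : X} (hxD : x ∈ D)
    (hxW : x ∈ W) :
    connectedComponentIn D x ⊆ {y | ∃ k, g^[k] y ∈ W} := by
  have hDA : D ∩ {y | ∃ k, g^[k] y ∈ W} = ⋃ k, D ∩ g^[k] ⁻¹' W := by
    ext y
    simp
  have hopen : IsOpen (D ∩ {y | ∃ k, g^[k] y ∈ W}) :=
    hDA ▸ isOpen_iUnion fun k => (hg.iterate hgD k).isOpen_inter_preimage hD hW
  refine (isPreconnected_connectedComponentIn.subset_of_closure_inter_subset hopen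
    ⟨x, mem_connectedComponentIn hxD, hxD, 0, hxW⟩ ?_).trans inter_subset_right
  rintro y ⟨hyA, hyC⟩
  have hyD := connectedComponentIn_subset D x hyC
  exact ⟨hyD, closure_setOf_iterate_mem_inter_subset hD hgD hg hW hgW hδ hWf hf
    ⟨closure_mono inter_subset_right hyA, hyD⟩⟩

end Absorption

section Schroeder

variable {X : Type*} {g : X → X} {V : Set X}

theorem apply_iterate_eq_pow_mul {R : Type*} [Monoid R] {f : X → R} {μ : R}
    (hgV : MapsTo g V V) (hfg : ∀ z ∈ V, f (g z) = μ * f z) (n : ℕ) {z : X} (hz : z ∈ V) :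
    f (g^[n] z) = μ ^ n * f z := by
  induction n with
  | zero => simp
  | succ n ih => rw [iterate_succ_apply', hfg _ (hgV.iterate n hz), ih, pow_succ', mul_assoc]

theorem tendstoLocallyUniformlyOn_comp_iterate_reachSet [TopologicalSpace X] {𝕜 : Type*}
    [NormedField 𝕜] {f : X → 𝕜} {μ : 𝕜} {U : Set X}
    (hU : IsOpen U) (hg : ContinuousOn g U) (hV : IsOpen V) (hVU : V ⊆ U) (hgV : MapsTo g V V)
    (hf : ContinuousOn f V) (hfg : ∀ z ∈ V, f (g z) = μ * f z) (hμ : ‖μ‖ < 1) :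
    TendstoLocallyUniformlyOn (fun n => f ∘ g^[n]) 0 atTop (reachSet g U V) := by
  have hD := isOpen_reachSet hU hg hV
  have hgD := mapsTo_reachSet hVU hgV
  rw [Metric.tendstoLocallyUniformlyOn_iff]
  rintro ε hε x ⟨n, hxn⟩
  have hcont : ContinuousAt (fun y => f (g^[n] y)) x :=
    (hf.continuousAt (hV.mem_nhds hxn.2)).comp
      (((hg.mono reachSet_subset).iterate hgD n).continuousAt (hD.mem_nhds ⟨n, hxn⟩))
  set M := ‖f (g^[n] x)‖ + 1
  have hsmall : ∀ᶠ j in atTop, ‖μ‖ ^ j * M < ε := by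
    have := (tendsto_pow_atTop_nhds_zero_of_lt_one (norm_nonneg μ) hμ).mul_const M
    rw [zero_mul] at this
    exact this.eventually (gt_mem_nhds hε)
  refine ⟨reachSetAt g U V n ∩ {y | ‖f (g^[n] y)‖ < M}, mem_nhdsWithin_of_mem_nhds
    (inter_mem ((isOpen_reachSetAt hU hg hV n).mem_nhds hxn)
      (hcont.norm.eventually (gt_mem_nhds (lt_add_one _)))), ?_⟩
  filter_upwards [(tendsto_sub_atTop_nat n).eventually hsmall, eventually_ge_atTop n]
    with m hm hnm y ⟨hyn, hyM⟩
  calc dist ((0 : X → 𝕜) y) (f (g^[m] y)) = ‖f (g^[m - n] (g^[n] y))‖ := by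
        rw [Pi.zero_apply, dist_zero_left, ← iterate_add_apply, Nat.sub_add_cancel hnm]
    _ = ‖μ‖ ^ (m - n) * ‖f (g^[n] y)‖ := by
        rw [apply_iterate_eq_pow_mul hgV hfg _ hyn.2, norm_mul, norm_pow]
    _ ≤ ‖μ‖ ^ (m - n) * M := by gcongr; exact hyM.le
    _ < ε := hm

end Schroeder

theorem exists_trap_of_hasStrictDerivAt {𝕜 : Type*} [NontriviallyNormedField 𝕜]
    [CompleteSpace 𝕜] {f g : 𝕜 → 𝕜} {f' x₀ μ : 𝕜} {V : Set 𝕜} (hf : HasStrictDerivAt f f' x₀)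
    (hf' : f' ≠ 0) (hf0 : f x₀ = 0) (hg : ContinuousAt g x₀) (hgx₀ : g x₀ = x₀)
    (hV : V ∈ 𝓝 x₀) (hfg : ∀ z ∈ V, f (g z) = μ * f z) (hμ : ‖μ‖ < 1) :
    ∃ W : Set 𝕜, IsOpen W ∧ x₀ ∈ W ∧ MapsTo g W W ∧
      (∀ w ∈ W, Tendsto (fun n => g^[n] w) atTop (𝓝 x₀)) ∧
      ∃ δ > 0, ∀ u ∈ closure W, ‖f u‖ < δ → u ∈ W := by
  set e := (hf.hasStrictFDerivAt_equiv hf').toOpenPartialHomeomorph f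
  have hx₀e : x₀ ∈ e.source := (hf.hasStrictFDerivAt_equiv hf').mem_toOpenPartialHomeomorph_source
  -- near `x₀`, a point of `e.source` is determined by its image under `f`
  have hnhds : 𝓝 x₀ = 𝓟 e.source ⊓ comap f (𝓝 0) := by
    rw [inf_comm]
    simpa [e, hf0] using e.nhds_eq_comap_inf_principal hx₀e
  obtain ⟨r, hr, hrsub⟩ := nhds_basis_closedBall.mem_iff.1 <|
    inter_mem (inter_mem (e.open_source.mem_nhds hx₀e) hV)
      (hg.preimage_mem_nhds (hgx₀ ▸ e.open_source.mem_nhds hx₀e))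
  obtain ⟨δ, hδ, hδsub⟩ :=
    ((nhds_basis_ball.comap f).principal_inf e.source).mem_iff.1 (hnhds ▸ ball_mem_nhds x₀ hr)
  set W := e.source ∩ f ⁻¹' ball 0 δ
  have hWV : W ⊆ V := fun u hu => (hrsub (ball_subset_closedBall (hδsub hu))).1.2
  have hgW : MapsTo g W W := by
    intro u hu
    refine ⟨(hrsub (ball_subset_closedBall (hδsub hu))).2, ?_⟩
    rw [mem_preimage, mem_ball_zero_iff, hfg u (hWV hu), norm_mul]
    exact (mul_le_of_le_one_left (norm_nonneg _) hμ.le).trans_lt (mem_ball_zero_iff.1 hu.2)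
  refine ⟨W, e.continuousOn.isOpen_inter_preimage e.open_source isOpen_ball,
    ⟨hx₀e, by simp [hf0, hδ]⟩, hgW, fun w hw => ?_, δ, hδ, fun u hu hfu => ⟨?_, ?_⟩⟩
  · rw [hnhds, tendsto_inf, tendsto_principal, tendsto_comap_iff]
    refine ⟨Eventually.of_forall fun n => (hgW.iterate n hw).1, ?_⟩
    have hfw : (f ∘ fun n => g^[n] w) = fun n => μ ^ n * f w :=
      funext fun n => apply_iterate_eq_pow_mul hgW (fun z hz => hfg z (hWV hz)) n hw
    simpa [hfw] using (tendsto_pow_atTop_nhds_zero_of_norm_lt_one hμ).mul_const (f w)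
  · exact (hrsub (closure_ball_subset_closedBall (closure_mono hδsub hu))).1.1
  · exact mem_ball_zero_iff.2 hfu

theorem linearizer_domain_eq_immediate_basin_general
    (g : ℂ → ℂ) (U : Set ℂ) (hU : IsOpen U) (hg : AnalyticOnNhd ℂ g U)
    (x₀ : ℂ) (hfix : g x₀ = x₀)
    (μ : ℂ) (hμ1 : ‖μ‖ < 1)
    (f : ℂ → ℂ) (V : Set ℂ) (hV : IsOpen V) (hx₀V : x₀ ∈ V) (hVU : V ⊆ U)
    (hfan : AnalyticOnNhd ℂ f V)
    (hf0 : f x₀ = 0) (hf' : deriv f x₀ = 1)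
    (hSchroeder : ∀ z ∈ V, g z ∈ V ∧ f (g z) = μ * f z)
    -- the basin of attraction of x₀ under g
    (B : Set ℂ)
    (hB : B = {z : ℂ | (∀ n : ℕ, g^[n] z ∈ U) ∧
        Filter.Tendsto (fun n => g^[n] z) Filter.atTop (nhds x₀)})
    -- the maximal domain of continuation via f z = μ⁻ⁿ f (gⁿ z)
    (D : Set ℂ)
    (hD : D = {z : ℂ | ∃ n : ℕ, (∀ k : ℕ, k ≤ n → g^[k] z ∈ U) ∧ g^[n] z ∈ V}) :
    connectedComponentIn D x₀ = connectedComponentIn B x₀ := by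
  obtain rfl : D = reachSet g U V := hD
  subst hB
  have hgU : ContinuousOn g U := hg.continuousOn
  have hgV : MapsTo g V V := fun z hz => (hSchroeder z hz).1
  have hfg : ∀ z ∈ V, f (g z) = μ * f z := fun z hz => (hSchroeder z hz).2
  have hgD : MapsTo g (reachSet g U V) (reachSet g U V) := mapsTo_reachSet hVU hgV
  have hx₀D : x₀ ∈ reachSet g U V := ⟨0, by rw [reachSetAt_zero]; exact ⟨hVU hx₀V, hx₀V⟩⟩
  obtain ⟨W, hWo, hx₀W, hgW, hWx₀, δ, hδ, hWf⟩ := exists_trap_of_hasStrictDerivAt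
    (hf' ▸ (hfan x₀ hx₀V).hasStrictDerivAt) one_ne_zero hf0 (hg x₀ (hVU hx₀V)).continuousAt
    hfix (hV.mem_nhds hx₀V) hfg hμ1
  refine (isPreconnected_connectedComponentIn.subset_connectedComponentIn
    (mem_connectedComponentIn hx₀D) fun z hz => ?_).antisymm
    (connectedComponentIn_mono _ fun z hz => mem_reachSet_of_tendsto hz.1 hz.2 (hV.mem_nhds hx₀V))
  obtain ⟨k, hk⟩ := connectedComponentIn_subset_setOf_iterate_mem (isOpen_reachSet hU hgU hV)
    hgD (hgU.mono reachSet_subset) hWo hgW hδ hWf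
    (tendstoLocallyUniformlyOn_comp_iterate_reachSet hU hgU hV hVU hgV hfan.continuousOn hfg hμ1)
    hx₀D hx₀W hz
  have hzD := connectedComponentIn_subset _ _ hz
  exact ⟨fun n => reachSet_subset (hgD.iterate n hzD),
    (tendsto_add_atTop_iff_nat k).1 (by simpa only [iterate_add_apply] using hWx₀ _ hk)⟩

/-- the maximal domain of analytic continuation of a linearizer `f` via the
relation `f z = μ⁻ⁿ f (gⁿ z)` equals the immediate basin of attraction of `x₀` under `g`. -/
theorem linearizer_domain_eq_immediate_basin
    (g : ℂ → ℂ) (U : Set ℂ) (hU : IsOpen U) (hg : AnalyticOnNhd ℂ g U)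
    (x₀ : ℂ) (hx₀ : x₀ ∈ U) (hfix : g x₀ = x₀)
    (μ : ℂ) (hμ : deriv g x₀ = μ) (hμ0 : 0 < ‖μ‖) (hμ1 : ‖μ‖ < 1)
    (f : ℂ → ℂ) (V : Set ℂ) (hV : IsOpen V) (hx₀V : x₀ ∈ V) (hVU : V ⊆ U)
    (hfan : AnalyticOnNhd ℂ f V)
    (hf0 : f x₀ = 0) (hf' : deriv f x₀ = 1)
    (hSchroeder : ∀ z ∈ V, g z ∈ V ∧ f (g z) = μ * f z)
    -- the basin of attraction of x₀ under g
    (B : Set ℂ)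
    (hB : B = {z : ℂ | (∀ n : ℕ, g^[n] z ∈ U) ∧
        Filter.Tendsto (fun n => g^[n] z) Filter.atTop (nhds x₀)})
    -- the maximal domain of continuation via f z = μ⁻ⁿ f (gⁿ z)
    (D : Set ℂ)
    (hD : D = {z : ℂ | ∃ n : ℕ, (∀ k : ℕ, k ≤ n → g^[k] z ∈ U) ∧ g^[n] z ∈ V}) :
    connectedComponentIn D x₀ = connectedComponentIn B x₀ :=
  linearizer_domain_eq_immediate_basin_general g U hU hg x₀ hfix μ hμ1 f V hV hx₀V hVU hfan hf0 hf'
    hSchroeder B hB D hD
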